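/- There exist parameters (B_1, B_2, v_{11}, v_{12}, v_{21}, v_{22}) of the two-item all-pay auction, a Nash equilibrium (F_1, F_2) of that two-item auction, and an item j ∈ {1,2}, such that the pair of marginal distributions of F_1 and F_2 on the coordinate j is NOT a Nash equilibrium of the single-item all-pay auction with parameters (B_1, B_2, v_{1j}, v_{2j}). (Concretely this holds for B_1 = B_2 = 1, all four values equal to 3, with each player playing the uniform distribution on the segment {(t, 1 − t) : t ∈ [0, 1]}.) -/

import Mathlib

/-!
Take budgets `1`, all four values equal to some `c > 1` (here `3`), and let both players mix
uniformly over the budget line `{(t, 1 - t) : t ∈ [0, 1]}`. Both marginals are uniform on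
`[0, 1]`; against an atomless opponent ties have probability zero, so a bid `x ∈ [0, 1]` on one
item earns `(c - 1) x`. Against this strategy a bid vector therefore earns `(c - 1) (x₁ + x₂)`,
which is maximised by spending the whole budget, as the segment does: an equilibrium. In the
single-item auction, however, the uniform bid earns `(c - 1) / 2` against the uniform marginal,
while the pure bid `1` earns `c - 1`.
-/

open MeasureTheory Set

noncomputable section

/-- `L_j = min {B₁, B₂, v_{1j}, v_{2j}}` for item `j` of the two-item auction. -/
def Lval2 (B : Fin 2 → ℝ) (v : Fin 2 → Fin 2 → ℝ) (j : Fin 2) : ℝ :=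
  min (min (B 0) (B 1)) (min (v 0 j) (v 1 j))

/-- Probability that player `i` wins item `j` when bidding `xi` on it while the
opponent bids `xo`: the strictly higher bid wins; on a tie at `L_j` the player with
the strictly larger `min {Bᵢ, v_{ij}}` wins, and all other ties are fair coins. -/
def winProb2 (B : Fin 2 → ℝ) (v : Fin 2 → Fin 2 → ℝ) (i j : Fin 2) (xi xo : ℝ) : ℝ :=
  if xo < xi then 1
  else if xi < xo then 0
  else if xi = Lval2 B v j ∧ min (B (1 - i)) (v (1 - i) j) < min (B i) (v i j) then 1
  else if xi = Lval2 B v j ∧ min (B i) (v i j) < min (B (1 - i)) (v (1 - i) j) then 0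
  else 1 / 2

/-- Expected total utility of player `i` from the pure bid vectors `p` (own) and
`q` (opponent): the sum over the two items of the item payoffs. -/
def payoff2 (B : Fin 2 → ℝ) (v : Fin 2 → Fin 2 → ℝ) (i : Fin 2) (p q : ℝ × ℝ) : ℝ :=
  (winProb2 B v i 0 p.1 q.1 * v i 0 - p.1) +
    (winProb2 B v i 1 p.2 q.2 * v i 1 - p.2)

/-- Feasible bid vectors of a player with budget `Bi`. -/
def Feas (Bi : ℝ) : Set (ℝ × ℝ) := {p | 0 ≤ p.1 ∧ 0 ≤ p.2 ∧ p.1 + p.2 ≤ Bi}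

/-- A mixed strategy with budget `Bi`: a probability measure on the feasible set. -/
def IsStrategy2 (Bi : ℝ) (μ : Measure (ℝ × ℝ)) : Prop :=
  IsProbabilityMeasure μ ∧ μ (Feas Bi) = 1

/-- Expected utility of player `i` when he plays `μ` and the opponent plays `ν`. -/
def expUtil2 (B : Fin 2 → ℝ) (v : Fin 2 → Fin 2 → ℝ) (i : Fin 2)
    (μ ν : Measure (ℝ × ℝ)) : ℝ :=
  ∫ p, (∫ q, payoff2 B v i p q ∂ν) ∂μ

/-- `(F 0, F 1)` is a (mixed) Nash equilibrium of the two-item all-pay auction. -/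
def IsNash2 (B : Fin 2 → ℝ) (v : Fin 2 → Fin 2 → ℝ) (F : Fin 2 → Measure (ℝ × ℝ)) :
    Prop :=
  (∀ i, IsStrategy2 (B i) (F i)) ∧
  ∀ i, ∀ μ, IsStrategy2 (B i) μ →
    expUtil2 B v i μ (F (1 - i)) ≤ expUtil2 B v i (F i) (F (1 - i))

/-- The uniform distribution on the segment from `a` to `b` in the plane: the
pushforward of the uniform distribution on `[0, 1]` under the affine
parameterization of the segment. -/
def unifSeg (a b : ℝ × ℝ) : Measure (ℝ × ℝ) :=
  Measure.map (fun t : ℝ => ((1 - t) * a.1 + t * b.1, (1 - t) * a.2 + t * b.2))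
    (volume.restrict (Icc (0 : ℝ) 1))

/-- `L = min {B₁, B₂, v₁, v₂}` for the single-item auction. -/
def Lval1 (B v : Fin 2 → ℝ) : ℝ := min (min (B 0) (B 1)) (min (v 0) (v 1))

/-- Single-item winning probability with the same tie-breaking rule. -/
def winProb1 (B v : Fin 2 → ℝ) (i : Fin 2) (xi xo : ℝ) : ℝ :=
  if xo < xi then 1
  else if xi < xo then 0
  else if xi = Lval1 B v ∧ min (B (1 - i)) (v (1 - i)) < min (B i) (v i) then 1
  else if xi = Lval1 B v ∧ min (B i) (v i) < min (B (1 - i)) (v (1 - i)) then 0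
  else 1 / 2

/-- Single-item payoff of player `i`. -/
def payoff1 (B v : Fin 2 → ℝ) (i : Fin 2) (xi xo : ℝ) : ℝ :=
  winProb1 B v i xi xo * v i - xi

/-- A single-item mixed strategy: a probability measure on `[0, Bi]`. -/
def IsStrategy1 (Bi : ℝ) (μ : Measure ℝ) : Prop :=
  IsProbabilityMeasure μ ∧ μ (Icc 0 Bi) = 1

/-- Single-item expected utility. -/
def expUtil1 (B v : Fin 2 → ℝ) (i : Fin 2) (μ ν : Measure ℝ) : ℝ :=
  ∫ xi, (∫ xo, payoff1 B v i xi xo ∂ν) ∂μ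

/-- Nash equilibrium of the single-item all-pay auction. -/
def IsNash1 (B v : Fin 2 → ℝ) (F : Fin 2 → Measure ℝ) : Prop :=
  (∀ i, IsStrategy1 (B i) (F i)) ∧
  ∀ i, ∀ μ, IsStrategy1 (B i) μ →
    expUtil1 B v i μ (F (1 - i)) ≤ expUtil1 B v i (F i) (F (1 - i))

abbrev unitUniform : Measure ℝ := volume.restrict (Icc 0 1)

instance : IsProbabilityMeasure unitUniform := ⟨by simp⟩

lemma unitUniform_real_Iio {x : ℝ} (hx : x ∈ Icc 0 1) : unitUniform.real (Iio x) = x := by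
  have h : Iio x ∩ Icc 0 1 = Ico 0 x := by
    ext t; simp only [mem_inter_iff, mem_Iio, mem_Icc, mem_Ico]; grind
  rw [measureReal_restrict_apply measurableSet_Iio, h, Real.volume_real_Ico_of_le hx.1, sub_zero]

lemma map_const_sub_unitUniform : unitUniform.map (fun t => 1 - t) = unitUniform := by
  have h := ((volume.measurePreserving_sub_left (1 : ℝ)).restrict_preimage
    (measurableSet_Icc (a := (0 : ℝ)) (b := 1))).map_eq
  rwa [preimage_const_sub_Icc, sub_zero, sub_self] at h

section SingleItem

variable (B v : Fin 2 → ℝ) (i : Fin 2) (x : ℝ)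

lemma measurable_winProb1 : Measurable (winProb1 B v i x) := by
  unfold winProb1
  exact Measurable.ite measurableSet_Iio measurable_const
    (Measurable.ite measurableSet_Ioi measurable_const measurable_const)

lemma measurable_payoff1 : Measurable (payoff1 B v i x) :=
  ((measurable_winProb1 B v i x).mul_const _).sub_const _

lemma integrable_winProb1 (μ : Measure ℝ) [IsFiniteMeasure μ] :
    Integrable (winProb1 B v i x) μ :=
  .of_bound (measurable_winProb1 B v i x).aestronglyMeasurable 1
    (ae_of_all _ fun y => by unfold winProb1; split_ifs <;> norm_num)

lemma integrable_payoff1 (μ : Measure ℝ) [IsFiniteMeasure μ] : Integrable (payoff1 B v i x) μ :=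
  ((integrable_winProb1 B v i x μ).mul_const _).sub (integrable_const x)

lemma winProb1_ae_eq_indicator (μ : Measure ℝ) [NullSingletonClass μ] :
    winProb1 B v i x =ᵐ[μ] (Iio x).indicator 1 := by
  filter_upwards [μ.ae_ne x] with y hy
  rcases hy.lt_or_gt with h | h
  · simp [winProb1, h]
  · simp [winProb1, h, h.not_gt]

lemma integral_payoff1 (μ : Measure ℝ) [IsProbabilityMeasure μ] [NullSingletonClass μ] :
    ∫ y, payoff1 B v i x y ∂μ = v i * μ.real (Iio x) - x := by
  unfold payoff1
  rw [integral_sub ((integrable_winProb1 B v i x μ).mul_const _) (integrable_const x),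
    integral_mul_const, integral_congr_ae (winProb1_ae_eq_indicator B v i x μ),
    integral_indicator_one measurableSet_Iio, integral_const]
  simp [mul_comm]

lemma integral_payoff1_unitUniform (hx : x ∈ Icc 0 1) :
    ∫ y, payoff1 B v i x y ∂unitUniform = (v i - 1) * x := by
  rw [integral_payoff1, unitUniform_real_Iio hx]; ring

end SingleItem

lemma integral_payoff2 (B : Fin 2 → ℝ) (v : Fin 2 → Fin 2 → ℝ) (i : Fin 2) (p : ℝ × ℝ)
    (ν : Measure (ℝ × ℝ)) [IsFiniteMeasure ν] :
    ∫ q, payoff2 B v i p q ∂ν =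
      ∫ y, payoff1 B (fun k => v k 0) i p.1 y ∂ν.map Prod.fst +
        ∫ y, payoff1 B (fun k => v k 1) i p.2 y ∂ν.map Prod.snd := by
  -- item `j` of the two-item auction is definitionally the single-item auction with values `v · j`
  have hsplit : ∀ q : ℝ × ℝ, payoff2 B v i p q =
      payoff1 B (fun k => v k 0) i p.1 q.1 + payoff1 B (fun k => v k 1) i p.2 q.2 := fun _ => rfl
  simp_rw [hsplit]
  rw [integral_map measurable_fst.aemeasurable
      (measurable_payoff1 _ _ _ _).aestronglyMeasurable,
    integral_map measurable_snd.aemeasurable (measurable_payoff1 _ _ _ _).aestronglyMeasurable]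
  exact integral_add ((integrable_payoff1 _ _ _ _ (ν.map Prod.fst)).comp_measurable measurable_fst)
    ((integrable_payoff1 _ _ _ _ (ν.map Prod.snd)).comp_measurable measurable_snd)

lemma measurableSet_Feas (Bi : ℝ) : MeasurableSet (Feas Bi) :=
  (measurableSet_le measurable_const measurable_fst).inter
    ((measurableSet_le measurable_const measurable_snd).inter
      (measurableSet_le (measurable_fst.add measurable_snd) measurable_const))

lemma IsStrategy2.ae_mem_Feas {Bi : ℝ} {μ : Measure (ℝ × ℝ)} (hμ : IsStrategy2 Bi μ) :
    ∀ᵐ p ∂μ, p ∈ Feas Bi := by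
  have := hμ.1
  rw [ae_mem_iff_measure_eq (measurableSet_Feas Bi).nullMeasurableSet, measure_univ]
  exact hμ.2

lemma IsStrategy2.integral_add_le {Bi : ℝ} {μ : Measure (ℝ × ℝ)} (hμ : IsStrategy2 Bi μ) :
    ∫ p, (p.1 + p.2) ∂μ ≤ Bi := by
  have := hμ.1
  calc ∫ p, (p.1 + p.2) ∂μ ≤ ∫ _, Bi ∂μ :=
        integral_mono_of_nonneg (hμ.ae_mem_Feas.mono fun p hp => add_nonneg hp.1 hp.2.1)
          (integrable_const Bi) (hμ.ae_mem_Feas.mono fun p hp => hp.2.2)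
    _ = Bi := by simp

section Segment

variable (a b : ℝ × ℝ)

instance : IsProbabilityMeasure (unifSeg a b) := Measure.isProbabilityMeasure_map (by fun_prop)

lemma ae_unifSeg_of_forall {P : ℝ × ℝ → Prop} (hP : MeasurableSet {p | P p})
    (h : ∀ t ∈ Icc (0 : ℝ) 1, P ((1 - t) * a.1 + t * b.1, (1 - t) * a.2 + t * b.2)) :
    ∀ᵐ p ∂unifSeg a b, P p := by
  rw [unifSeg, ae_map_iff (by fun_prop) hP]
  exact ae_restrict_of_forall_mem measurableSet_Icc h

lemma map_fst_unifSeg :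
    (unifSeg a b).map Prod.fst = unitUniform.map (fun t => (1 - t) * a.1 + t * b.1) := by
  rw [unifSeg, Measure.map_map measurable_fst (by fun_prop)]; rfl

lemma map_snd_unifSeg :
    (unifSeg a b).map Prod.snd = unitUniform.map (fun t => (1 - t) * a.2 + t * b.2) := by
  rw [unifSeg, Measure.map_map measurable_snd (by fun_prop)]; rfl

lemma isStrategy2_unifSeg {Bi : ℝ} (ha : a ∈ Feas Bi) (hb : b ∈ Feas Bi) :
    IsStrategy2 Bi (unifSeg a b) := by
  refine ⟨inferInstance, ?_⟩
  rw [← measure_univ (μ := unifSeg a b),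
    ← ae_mem_iff_measure_eq (measurableSet_Feas Bi).nullMeasurableSet]
  refine ae_unifSeg_of_forall a b (measurableSet_Feas Bi) fun t ht => ?_
  have ht' : 0 ≤ 1 - t := sub_nonneg.2 ht.2
  refine ⟨?_, ?_, ?_⟩
  · nlinarith [mul_nonneg ht' ha.1, mul_nonneg ht.1 hb.1]
  · nlinarith [mul_nonneg ht' ha.2.1, mul_nonneg ht.1 hb.2.1]
  · nlinarith [mul_le_mul_of_nonneg_left ha.2.2 ht', mul_le_mul_of_nonneg_left hb.2.2 ht.1]

end Segment

lemma map_fst_antidiagonal : (unifSeg (0, 1) (1, 0)).map Prod.fst = unitUniform := by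
  simp [map_fst_unifSeg]

lemma map_snd_antidiagonal : (unifSeg (0, 1) (1, 0)).map Prod.snd = unitUniform := by
  simpa [map_snd_unifSeg] using map_const_sub_unitUniform

lemma isStrategy2_antidiagonal : IsStrategy2 1 (unifSeg (0, 1) (1, 0)) :=
  isStrategy2_unifSeg _ _ ⟨le_rfl, zero_le_one, by norm_num⟩ ⟨zero_le_one, le_rfl, by norm_num⟩

lemma integral_add_antidiagonal : ∫ p, (p.1 + p.2) ∂unifSeg (0, 1) (1, 0) = 1 := by
  have h : ∀ᵐ p ∂unifSeg (0, 1) (1, 0), p.1 + p.2 = 1 :=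
    ae_unifSeg_of_forall _ _ (measurableSet_eq_fun (by fun_prop) measurable_const)
      fun _ _ => by ring
  simp [integral_congr_ae h]

lemma expUtil2_antidiagonal (B : Fin 2 → ℝ) (v : Fin 2 → Fin 2 → ℝ) (i : Fin 2)
    {μ : Measure (ℝ × ℝ)} (hμ : IsStrategy2 1 μ) :
    expUtil2 B v i μ (unifSeg (0, 1) (1, 0)) =
      ∫ p, ((v i 0 - 1) * p.1 + (v i 1 - 1) * p.2) ∂μ := by
  refine integral_congr_ae (hμ.ae_mem_Feas.mono fun p hp => ?_)
  have hp₁ : p.1 ∈ Icc (0 : ℝ) 1 := ⟨hp.1, by linarith [hp.2.1, hp.2.2]⟩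
  have hp₂ : p.2 ∈ Icc (0 : ℝ) 1 := ⟨hp.2.1, by linarith [hp.1, hp.2.2]⟩
  dsimp only
  rw [integral_payoff2, map_fst_antidiagonal, map_snd_antidiagonal,
    integral_payoff1_unitUniform _ _ _ _ hp₁, integral_payoff1_unitUniform _ _ _ _ hp₂]

theorem isNash2_antidiagonal {c : ℝ} (hc : 1 ≤ c) :
    IsNash2 (fun _ => 1) (fun _ _ => c) (fun _ => unifSeg (0, 1) (1, 0)) := by
  refine ⟨fun _ => isStrategy2_antidiagonal, fun i μ hμ => ?_⟩
  simp only [expUtil2_antidiagonal _ _ _ hμ, expUtil2_antidiagonal _ _ _ isStrategy2_antidiagonal,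
    ← mul_add, integral_const_mul, integral_add_antidiagonal, mul_one]
  exact mul_le_of_le_one_right (sub_nonneg.2 hc) hμ.integral_add_le

lemma expUtil1_dirac_one {c : ℝ} :
    expUtil1 (fun _ => 1) (fun _ => c) 0 (Measure.dirac 1) unitUniform = c - 1 := by
  rw [expUtil1, integral_dirac, integral_payoff1_unitUniform _ _ _ _ ⟨zero_le_one, le_rfl⟩]
  simp

lemma expUtil1_unitUniform {c : ℝ} :
    expUtil1 (fun _ => 1) (fun _ => c) 0 unitUniform unitUniform = (c - 1) / 2 := by
  rw [expUtil1, setIntegral_congr_fun measurableSet_Icc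
      fun x hx => integral_payoff1_unitUniform _ _ _ _ hx,
    integral_Icc_eq_integral_Ioc, ← intervalIntegral.integral_of_le zero_le_one,
    intervalIntegral.integral_const_mul, integral_id]
  ring

theorem not_isNash1_unitUniform {c : ℝ} (hc : 1 < c) :
    ¬ IsNash1 (fun _ => 1) (fun _ => c) (fun _ => unitUniform) := by
  rintro ⟨-, hbest⟩
  have h := hbest 0 (Measure.dirac 1) ⟨inferInstance, by simp⟩
  rw [expUtil1_dirac_one, expUtil1_unitUniform] at h
  linarith

theorem marginals_not_nash :
    ∃ (B : Fin 2 → ℝ) (v : Fin 2 → Fin 2 → ℝ) (F : Fin 2 → Measure (ℝ × ℝ))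
      (j : Fin 2),
      (∀ i, 0 ≤ B i) ∧ (∀ i j', 0 < v i j') ∧
      IsNash2 B v F ∧
      ¬ IsNash1 B (fun i => v i j)
        (fun i => Measure.map (fun p : ℝ × ℝ => if j = 0 then p.1 else p.2) (F i)) := by
  refine ⟨fun _ => 1, fun _ _ => 3, fun _ => unifSeg (0, 1) (1, 0), 0, fun _ => zero_le_one,
    fun _ _ => by norm_num, isNash2_antidiagonal (by norm_num), ?_⟩
  show ¬ IsNash1 _ _ fun _ => (unifSeg (0, 1) (1, 0)).map Prod.fst
  rw [map_fst_antidiagonal]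
  exact not_isNash1_unitUniform (by norm_num)
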